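/- arXiv:2101.03830 — 7 statements merged into one kernel-verified Lean document; each statement's English description precedes it below -/
import Mathlib

section
/- Let M be a smooth boundaryless manifold, N a smooth manifold, X a vector field on M which is of class C¹ (as a section of the tangent bundle), Z a vector field on N, and α : M → N a map differentiable at every point. Suppose that for every t₀ ∈ ℝ and every curve γ : ℝ → M which is an integral curve of X at t₀, the curve α ∘ γ is an integral curve of Z at t₀. Then X and Z are α-related: for every x ∈ M, mfderiv α x (X x) = Z (α x). -/
open scoped Manifold

/-!
Through every point `x` there is a local integral curve `γ` of `X` with `γ 0 = x`. By hypothesis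
`α ∘ γ` is an integral curve of `Z`, so its velocity at `0` is `Z (α x)`; by the chain rule it is
also `mfderiv α x (X x)`.
-/

section

variable {E : Type*} [NormedAddCommGroup E] [NormedSpace ℝ E]
  {H : Type*} [TopologicalSpace H] {I : ModelWithCorners ℝ E H}
  {M : Type*} [TopologicalSpace M] [ChartedSpace H M]
  {E' : Type*} [NormedAddCommGroup E'] [NormedSpace ℝ E']
  {H' : Type*} [TopologicalSpace H'] {I' : ModelWithCorners ℝ E' H'}
  {N : Type*} [TopologicalSpace N] [ChartedSpace H' N]

theorem IsMIntegralCurveAt.mfderiv_apply_eq_of_comp {X : (x : M) → TangentSpace I x}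
    {Z : (y : N) → TangentSpace I' y} {α : M → N} {γ : ℝ → M} {t₀ : ℝ}
    (hγ : IsMIntegralCurveAt γ X t₀) (hαγ : IsMIntegralCurveAt (α ∘ γ) Z t₀)
    (hα : MDifferentiableAt I I' α (γ t₀)) :
    mfderiv I I' α (γ t₀) (X (γ t₀)) = Z (α (γ t₀)) := by
  have hchain : HasMFDerivAt 𝓘(ℝ, ℝ) I' (α ∘ γ) t₀
      ((mfderiv I I' α (γ t₀)).comp ((1 : ℝ →L[ℝ] ℝ).smulRight (X (γ t₀)))) :=
    hα.hasMFDerivAt.comp t₀ hγ.hasMFDerivAt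
  have hvelocity : (mfderiv I I' α (γ t₀)).comp ((1 : ℝ →L[ℝ] ℝ).smulRight (X (γ t₀))) =
      (1 : ℝ →L[ℝ] ℝ).smulRight (Z (α (γ t₀))) :=
    hchain.mfderiv.symm.trans hαγ.hasMFDerivAt.mfderiv
  simpa only [ContinuousLinearMap.comp_apply, ContinuousLinearMap.smulRight_apply,
    one_apply_eq_self, one_smul] using congrArg (fun L ↦ L 1) hvelocity

end

theorem alpha_related_of_maps_integral_curves_general
    {E : Type*} [NormedAddCommGroup E] [NormedSpace ℝ E] [CompleteSpace E]
    {H : Type*} [TopologicalSpace H] {I : ModelWithCorners ℝ E H}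
    {M : Type*} [TopologicalSpace M] [ChartedSpace H M] [IsManifold I (⊤ : ℕ∞) M]
    [BoundarylessManifold I M]
    {E' : Type*} [NormedAddCommGroup E'] [NormedSpace ℝ E']
    {H' : Type*} [TopologicalSpace H'] {I' : ModelWithCorners ℝ E' H'}
    {N : Type*} [TopologicalSpace N] [ChartedSpace H' N]
    (X : (x : M) → TangentSpace I x) (Z : (y : N) → TangentSpace I' y)
    (hX : ContMDiff I I.tangent 1 (fun x ↦ (⟨x, X x⟩ : TangentBundle I M)))
    (α : M → N) (hα : ∀ x, MDifferentiableAt I I' α x)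
    (hmaps : ∀ (t₀ : ℝ) (γ : ℝ → M), IsMIntegralCurveAt γ X t₀ →
      IsMIntegralCurveAt (α ∘ γ) Z t₀) :
    ∀ x, mfderiv I I' α x (X x) = Z (α x) := by
  intro x
  obtain ⟨γ, rfl, hγ⟩ := exists_isMIntegralCurveAt_of_contMDiffAt_boundaryless 0 (hX x)
  exact hγ.mfderiv_apply_eq_of_comp (hmaps 0 γ hγ) (hα (γ 0))

/-- Converse of the integral-curve mapping property: if `M` is boundaryless and `X` is a `C¹`
vector field on `M`, and if the map `α : M → N` (differentiable everywhere) sends every local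
integral curve of `X` to a local integral curve of `Z`, then `X` and `Z` are `α`-related. -/
theorem alpha_related_of_maps_integral_curves
    {E : Type*} [NormedAddCommGroup E] [NormedSpace ℝ E] [CompleteSpace E]
    {H : Type*} [TopologicalSpace H] {I : ModelWithCorners ℝ E H}
    {M : Type*} [TopologicalSpace M] [ChartedSpace H M] [IsManifold I (⊤ : ℕ∞) M]
    [BoundarylessManifold I M]
    {E' : Type*} [NormedAddCommGroup E'] [NormedSpace ℝ E']
    {H' : Type*} [TopologicalSpace H'] {I' : ModelWithCorners ℝ E' H'}
    {N : Type*} [TopologicalSpace N] [ChartedSpace H' N] [IsManifold I' (⊤ : ℕ∞) N]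
    (X : (x : M) → TangentSpace I x) (Z : (y : N) → TangentSpace I' y)
    (hX : ContMDiff I I.tangent 1 (fun x ↦ (⟨x, X x⟩ : TangentBundle I M)))
    (α : M → N) (hα : ∀ x, MDifferentiableAt I I' α x)
    (hmaps : ∀ (t₀ : ℝ) (γ : ℝ → M), IsMIntegralCurveAt γ X t₀ →
      IsMIntegralCurveAt (α ∘ γ) Z t₀) :
    ∀ x, mfderiv I I' α x (X x) = Z (α x) :=
  alpha_related_of_maps_integral_curves_general X Z hX α hα hmaps
end

section
/- Let H : E × E → ℝ be of class C¹ and S : E → ℝ of class C². Then the following are equivalent: (i) the function q ↦ H(q, ∇S q) has zero Fréchet derivative at every q ∈ E (i.e. it is locally constant); (ii) for every q ∈ E, fderiv (fun q' => ∇S q') q (∇_pH(q, ∇S q)) = −∇_qH(q, ∇S q), i.e. the exact 1-form dS is a solution of the generalized Hamiltonian Hamilton–Jacobi problem. -/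
open scoped Gradient

/-- The gradient at `q` of the partial map `q' ↦ H (q', p)`. -/
noncomputable def gradQ {n : ℕ}
    (H : EuclideanSpace ℝ (Fin n) × EuclideanSpace ℝ (Fin n) → ℝ)
    (q p : EuclideanSpace ℝ (Fin n)) : EuclideanSpace ℝ (Fin n) :=
  ∇ (fun q' => H (q', p)) q

/-- The gradient at `p` of the partial map `p' ↦ H (q, p')`. -/
noncomputable def gradP {n : ℕ}
    (H : EuclideanSpace ℝ (Fin n) × EuclideanSpace ℝ (Fin n) → ℝ)
    (q p : EuclideanSpace ℝ (Fin n)) : EuclideanSpace ℝ (Fin n) :=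
  ∇ (fun p' => H (q, p')) p

/-! By the chain rule, `q ↦ H (q, ∇S q)` has gradient `∇_qH + (D∇S)* ∇_pH`. Since `S` is `C²`, its
second derivative is symmetric, so the Hessian `D∇S` is self-adjoint and this gradient is
`∇_qH + D∇S (∇_pH)`; it vanishes exactly when `D∇S (∇_pH) = -∇_qH`. -/

open InnerProductSpace RealInnerProductSpace

section Hessian

variable {F : Type*} [NormedAddCommGroup F] [InnerProductSpace ℝ F] [CompleteSpace F]

theorem inner_fderiv_gradient_apply (f : F → ℝ) (x v w : F) :
    ⟪fderiv ℝ (∇ f) x v, w⟫ = fderiv ℝ (fderiv ℝ f) x v w := by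
  rw [show ∇ f = (toDual ℝ F).symm ∘ fderiv ℝ f from rfl, (toDual ℝ F).symm.comp_fderiv]
  exact toDual_symm_apply

theorem IsSymmSndFDerivAt.isSymmetric_fderiv_gradient {f : F → ℝ} {x : F}
    (hf : IsSymmSndFDerivAt ℝ f x) : (fderiv ℝ (∇ f) x : F →ₗ[ℝ] F).IsSymmetric := by
  intro v w
  rw [← real_inner_comm v]
  simp only [ContinuousLinearMap.coe_coe, inner_fderiv_gradient_apply, hf.eq v w]

end Hessian

section PartialGradients

variable {n : ℕ} {H : EuclideanSpace ℝ (Fin n) × EuclideanSpace ℝ (Fin n) → ℝ}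
  {q p : EuclideanSpace ℝ (Fin n)}

theorem inner_gradQ (hH : DifferentiableAt ℝ H (q, p)) (v : EuclideanSpace ℝ (Fin n)) :
    ⟪gradQ H q p, v⟫ = fderiv ℝ H (q, p) (v, 0) := by
  have hpartial : HasFDerivAt (fun q' => H (q', p)) _ q :=
    hH.hasFDerivAt.comp q (hasFDerivAt_prodMk_left q p)
  rw [gradQ, inner_gradient_left, hpartial.fderiv]
  rfl

theorem inner_gradP (hH : DifferentiableAt ℝ H (q, p)) (w : EuclideanSpace ℝ (Fin n)) :
    ⟪gradP H q p, w⟫ = fderiv ℝ H (q, p) (0, w) := by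
  have hpartial : HasFDerivAt (fun p' => H (q, p')) _ p :=
    hH.hasFDerivAt.comp p (hasFDerivAt_prodMk_right q p)
  rw [gradP, inner_gradient_left, hpartial.fderiv]
  rfl

theorem hasGradientAt_comp_graph {g : EuclideanSpace ℝ (Fin n) → EuclideanSpace ℝ (Fin n)}
    (hH : DifferentiableAt ℝ H (q, g q)) (hg : DifferentiableAt ℝ g q) :
    HasGradientAt (fun q' => H (q', g q'))
      (gradQ H q (g q) + (fderiv ℝ g q).adjoint (gradP H q (g q))) q := by
  have hcomp : HasFDerivAt (fun q' => H (q', g q'))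
      ((fderiv ℝ H (q, g q)).comp ((ContinuousLinearMap.id ℝ _).prod (fderiv ℝ g q))) q :=
    hH.hasFDerivAt.comp q ((hasFDerivAt_id q).prodMk hg.hasFDerivAt)
  refine hcomp.congr_fderiv (ContinuousLinearMap.ext fun v => ?_)
  have hsplit : (v, fderiv ℝ g q v) = (v, 0) + (0, fderiv ℝ g q v) := by simp
  simp only [ContinuousLinearMap.comp_apply, ContinuousLinearMap.prod_apply,
    ContinuousLinearMap.id_apply, hsplit, map_add, add_apply, toDual_apply_apply,
    ContinuousLinearMap.adjoint_inner_left, inner_gradQ hH, inner_gradP hH]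

end PartialGradients

open RealInnerProductSpace in
/-- For a `C¹` Hamiltonian `H` and a `C²` function `S`, the function `q ↦ H (q, ∇S q)` is
locally constant (zero Fréchet derivative everywhere) iff the exact 1-form `dS` is a solution
of the generalized Hamiltonian Hamilton–Jacobi problem. -/
theorem hamiltonJacobi_iff_exact_solution {n : ℕ}
    (H : EuclideanSpace ℝ (Fin n) × EuclideanSpace ℝ (Fin n) → ℝ)
    (hH : ContDiff ℝ 1 H)
    (S : EuclideanSpace ℝ (Fin n) → ℝ) (hS : ContDiff ℝ 2 S) :
    (∀ q, fderiv ℝ (fun q' => H (q', ∇ S q')) q = 0) ↔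
    (∀ q, fderiv ℝ (fun q' => ∇ S q') q (gradP H q (∇ S q)) = - gradQ H q (∇ S q)) := by
  have hgradS : Differentiable ℝ (∇ S) :=
    (toDual ℝ _).symm.differentiable.comp ((hS.fderiv_right le_rfl).differentiable one_ne_zero)
  refine forall_congr' fun q => ?_
  have hHessian : (fderiv ℝ (∇ S) q : EuclideanSpace ℝ (Fin n) →ₗ[ℝ] _).IsSymmetric :=
    ((hS.contDiffAt (x := q)).isSymmSndFDerivAt (by simp)).isSymmetric_fderiv_gradient
  rw [(hasGradientAt_comp_graph (hH.differentiable one_ne_zero _) (hgradS q)).hasFDerivAt.fderiv,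
    hHessian.clm_adjoint_eq, LinearIsometryEquiv.map_eq_zero_iff, add_comm,
    ← eq_neg_iff_add_eq_zero]
end

section
/- Let H : E × E → ℝ be differentiable and α : E → E differentiable at every point, and set X_α(q) := ∇_pH(q, α q). Then the following are equivalent: (i) for all q, fderiv α q (X_α q) = −∇_qH(q, α q) (α is a solution of the generalized Hamiltonian Hamilton–Jacobi problem); (ii) for all q ∈ E and all v ∈ E, ⟪fderiv α q (X_α q), v⟫ − ⟪fderiv α q v, X_α q⟫ = −(⟪∇_qH(q, α q), v⟫ + ⟪∇_pH(q, α q), fderiv α q v⟫), i.e. the equation i_{X_α} dα = −d(α*H) holds. -/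
open scoped Gradient RealInnerProductSpace

theorem eq_neg_iff_forall_inner {E : Type*} [NormedAddCommGroup E] [InnerProductSpace ℝ E]
    {a b : E} : a = -b ↔ ∀ v, ⟪a, v⟫ = -⟪b, v⟫ :=
  ⟨fun h v => by rw [h, inner_neg_left],
    fun h => ext_inner_right ℝ fun v => by rw [h, inner_neg_left]⟩

theorem genHJ_iff_contraction_equation_general {n : ℕ}
    (H : EuclideanSpace ℝ (Fin n) × EuclideanSpace ℝ (Fin n) → ℝ)
    (α : EuclideanSpace ℝ (Fin n) → EuclideanSpace ℝ (Fin n)) :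
    (∀ q, fderiv ℝ α q (gradP H q (α q)) = - gradQ H q (α q)) ↔
    (∀ q v, ⟪fderiv ℝ α q (gradP H q (α q)), v⟫ - ⟪fderiv ℝ α q v, gradP H q (α q)⟫ =
      -(⟪gradQ H q (α q), v⟫ + ⟪gradP H q (α q), fderiv ℝ α q v⟫)) := by
  refine forall_congr' fun q => eq_neg_iff_forall_inner.trans (forall_congr' fun v => ?_)
  -- `⟪dα v, X_α⟫` occurs on both sides and cancels
  rw [real_inner_comm (gradP H q (α q))]
  constructor <;> intro h <;> linarith

/-- A 1-form `α` is a solution of the generalized Hamiltonian Hamilton–Jacobi problem iff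
the equation `i_{X_α} dα = -d(α*H)` holds, where `X_α q = ∇ₚH (q, α q)` is the vector field
associated with `α`. -/
theorem genHJ_iff_contraction_equation {n : ℕ}
    (H : EuclideanSpace ℝ (Fin n) × EuclideanSpace ℝ (Fin n) → ℝ)
    (hH : Differentiable ℝ H)
    (α : EuclideanSpace ℝ (Fin n) → EuclideanSpace ℝ (Fin n))
    (hα : ∀ q, DifferentiableAt ℝ α q) :
    (∀ q, fderiv ℝ α q (gradP H q (α q)) = - gradQ H q (α q)) ↔
    (∀ q v, ⟪fderiv ℝ α q (gradP H q (α q)), v⟫ - ⟪fderiv ℝ α q v, gradP H q (α q)⟫ =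
      -(⟪gradQ H q (α q), v⟫ + ⟪gradP H q (α q), fderiv ℝ α q v⟫)) :=
  genHJ_iff_contraction_equation_general H α
end

section
/- Let H : E × E → ℝ be differentiable and α : E → E differentiable at every point, with X_α(q) := ∇_pH(q, α q). Assume α is a solution of the generalized Hamiltonian Hamilton–Jacobi problem: fderiv α q (X_α q) = −∇_qH(q, α q) for all q. Then for every curve γ : ℝ → E with γ'(t) = X_α(γ t) for all t, the curve ζ(t) := (γ t, α (γ t)) solves Hamilton's equations: at every t, ζ has derivative (∇_pH(ζ t), −∇_qH(ζ t)). -/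
open scoped Gradient

theorem HasDerivAt.graph_comp {𝕜 E F : Type*} [NontriviallyNormedField 𝕜]
    [NormedAddCommGroup E] [NormedSpace 𝕜 E] [NormedAddCommGroup F] [NormedSpace 𝕜 F]
    {γ : 𝕜 → E} {v : E} {t : 𝕜} {α : E → F}
    (hγ : HasDerivAt γ v t) (hα : DifferentiableAt 𝕜 α (γ t)) :
    HasDerivAt (fun s => (γ s, α (γ s))) (v, fderiv 𝕜 α (γ t) v) t :=
  hγ.prodMk (hα.hasFDerivAt.comp_hasDerivAt t hγ)

theorem lifted_curve_solves_hamilton_of_genHJ_general {n : ℕ}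
    (H : EuclideanSpace ℝ (Fin n) × EuclideanSpace ℝ (Fin n) → ℝ)
    (α : EuclideanSpace ℝ (Fin n) → EuclideanSpace ℝ (Fin n))
    (hα : ∀ q, DifferentiableAt ℝ α q)
    (hHJ : ∀ q, fderiv ℝ α q (gradP H q (α q)) = - gradQ H q (α q))
    (γ : ℝ → EuclideanSpace ℝ (Fin n))
    (hγ : ∀ t, HasDerivAt γ (gradP H (γ t) (α (γ t))) t) :
    ∀ t, HasDerivAt
      (fun s => ((γ s, α (γ s)) : EuclideanSpace ℝ (Fin n) × EuclideanSpace ℝ (Fin n)))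
      (gradP H (γ t) (α (γ t)), -gradQ H (γ t) (α (γ t))) t := by
  intro t
  simpa only [hHJ] using (hγ t).graph_comp (hα (γ t))

/-- If `α` is a solution of the generalized Hamiltonian Hamilton–Jacobi problem, then any
integral curve `γ` of the associated vector field `X_α q = ∇ₚH (q, α q)` lifts to a curve
`ζ t = (γ t, α (γ t))` solving Hamilton's equations. -/
theorem lifted_curve_solves_hamilton_of_genHJ {n : ℕ}
    (H : EuclideanSpace ℝ (Fin n) × EuclideanSpace ℝ (Fin n) → ℝ)
    (hH : Differentiable ℝ H)
    (α : EuclideanSpace ℝ (Fin n) → EuclideanSpace ℝ (Fin n))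
    (hα : ∀ q, DifferentiableAt ℝ α q)
    (hHJ : ∀ q, fderiv ℝ α q (gradP H q (α q)) = - gradQ H q (α q))
    (γ : ℝ → EuclideanSpace ℝ (Fin n))
    (hγ : ∀ t, HasDerivAt γ (gradP H (γ t) (α (γ t))) t) :
    ∀ t, HasDerivAt
      (fun s => ((γ s, α (γ s)) : EuclideanSpace ℝ (Fin n) × EuclideanSpace ℝ (Fin n)))
      (gradP H (γ t) (α (γ t)), -gradQ H (γ t) (α (γ t))) t :=
  lifted_curve_solves_hamilton_of_genHJ_general H α hα hHJ γ hγ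
end

section
/- Let H : E × E → ℝ be differentiable with Lipschitz Hamiltonian vector field Z_H(q,p) := (∇_pH(q,p), −∇_qH(q,p)), and let α : E → E be differentiable at every point and a solution of the generalized Hamiltonian Hamilton–Jacobi problem: fderiv α q (X_α q) = −∇_qH(q, α q) for all q, where X_α(q) := ∇_pH(q, α q). Let γ : ℝ → E satisfy γ'(t) = X_α(γ t) for all t with γ 0 = q₀, and let ζ : ℝ → E × E solve Hamilton's equations with ζ 0 = (q₀, α q₀). Then ζ t = (γ t, α (γ t)) for all t ∈ ℝ; in particular, the integral curve ζ of Z_H starting on the graph of α stays in the graph of α and its first component projects onto the integral curve γ of X_α. -/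
open scoped Gradient

/-- The Hamiltonian vector field `Z_H (q, p) = (∇ₚH (q, p), -∇_qH (q, p))`. -/
noncomputable def hamVF {n : ℕ}
    (H : EuclideanSpace ℝ (Fin n) × EuclideanSpace ℝ (Fin n) → ℝ)
    (qp : EuclideanSpace ℝ (Fin n) × EuclideanSpace ℝ (Fin n)) :
    EuclideanSpace ℝ (Fin n) × EuclideanSpace ℝ (Fin n) :=
  (gradP H qp.1 qp.2, -gradQ H qp.1 qp.2)

/-!
Along an integral curve `γ` of `X_α`, the chain rule and the Hamilton–Jacobi equation give
`(α ∘ γ)' = Dα(γ) X_α(γ) = -∇_qH(γ, α ∘ γ)`, so the lifted curve `t ↦ (γ t, α (γ t))` solves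
Hamilton's equations. It starts where `ζ` does, and solutions of Hamilton's equations are
unique because `Z_H` is Lipschitz.
-/

theorem hasDerivAt_graph_comp {E F : Type*} [NormedAddCommGroup E] [NormedSpace ℝ E]
    [NormedAddCommGroup F] [NormedSpace ℝ F] {α : E → F} {γ : ℝ → E} {v : E} {t : ℝ}
    (hα : DifferentiableAt ℝ α (γ t)) (hγ : HasDerivAt γ v t) :
    HasDerivAt (fun s => (γ s, α (γ s))) (v, fderiv ℝ α (γ t) v) t :=
  hγ.prodMk (hα.hasFDerivAt.comp_hasDerivAt t hγ)

theorem hasDerivAt_graph_hamVF {n : ℕ}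
    {H : EuclideanSpace ℝ (Fin n) × EuclideanSpace ℝ (Fin n) → ℝ}
    {α : EuclideanSpace ℝ (Fin n) → EuclideanSpace ℝ (Fin n)}
    (hα : ∀ q, DifferentiableAt ℝ α q)
    (hHJ : ∀ q, fderiv ℝ α q (gradP H q (α q)) = - gradQ H q (α q))
    {γ : ℝ → EuclideanSpace ℝ (Fin n)}
    (hγ : ∀ t, HasDerivAt γ (gradP H (γ t) (α (γ t))) t) (t : ℝ) :
    HasDerivAt (fun s => (γ s, α (γ s))) (hamVF H (γ t, α (γ t))) t := by
  simpa only [hamVF, hHJ] using hasDerivAt_graph_comp (hα (γ t)) (hγ t)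

theorem integral_curve_stays_in_graph_general {n : ℕ}
    (H : EuclideanSpace ℝ (Fin n) × EuclideanSpace ℝ (Fin n) → ℝ)
    (K : NNReal) (hLip : LipschitzWith K (hamVF H))
    (α : EuclideanSpace ℝ (Fin n) → EuclideanSpace ℝ (Fin n))
    (hα : ∀ q, DifferentiableAt ℝ α q)
    (hHJ : ∀ q, fderiv ℝ α q (gradP H q (α q)) = - gradQ H q (α q))
    (q₀ : EuclideanSpace ℝ (Fin n))
    (γ : ℝ → EuclideanSpace ℝ (Fin n))
    (hγ : ∀ t, HasDerivAt γ (gradP H (γ t) (α (γ t))) t) (hγ0 : γ 0 = q₀)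
    (ζ : ℝ → EuclideanSpace ℝ (Fin n) × EuclideanSpace ℝ (Fin n))
    (hζ : ∀ t, HasDerivAt ζ (hamVF H (ζ t)) t) (hζ0 : ζ 0 = (q₀, α q₀)) :
    ∀ t, ζ t = (γ t, α (γ t)) := by
  have hgraph := hasDerivAt_graph_hamVF hα hHJ hγ
  have hunique : ζ = fun t => (γ t, α (γ t)) :=
    ODE_solution_unique_univ (v := fun _ => hamVF H) (s := fun _ => Set.univ) (t₀ := 0)
      (fun _ => hLip.lipschitzOnWith) (fun t => ⟨hζ t, trivial⟩)
      (fun t => ⟨hgraph t, trivial⟩) (by rw [hζ0, hγ0])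
  exact congrFun hunique

/-- If `α` solves the generalized Hamiltonian Hamilton–Jacobi problem and the Hamiltonian
vector field is Lipschitz, then the integral curve of `Z_H` starting on the graph of `α`
stays in the graph of `α` and projects onto the corresponding integral curve of `X_α`. -/
theorem integral_curve_stays_in_graph {n : ℕ}
    (H : EuclideanSpace ℝ (Fin n) × EuclideanSpace ℝ (Fin n) → ℝ)
    (hH : Differentiable ℝ H)
    (K : NNReal) (hLip : LipschitzWith K (hamVF H))
    (α : EuclideanSpace ℝ (Fin n) → EuclideanSpace ℝ (Fin n))
    (hα : ∀ q, DifferentiableAt ℝ α q)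
    (hHJ : ∀ q, fderiv ℝ α q (gradP H q (α q)) = - gradQ H q (α q))
    (q₀ : EuclideanSpace ℝ (Fin n))
    (γ : ℝ → EuclideanSpace ℝ (Fin n))
    (hγ : ∀ t, HasDerivAt γ (gradP H (γ t) (α (γ t))) t) (hγ0 : γ 0 = q₀)
    (ζ : ℝ → EuclideanSpace ℝ (Fin n) × EuclideanSpace ℝ (Fin n))
    (hζ : ∀ t, HasDerivAt ζ (hamVF H (ζ t)) t) (hζ0 : ζ 0 = (q₀, α q₀)) :
    ∀ t, ζ t = (γ t, α (γ t)) :=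
  integral_curve_stays_in_graph_general H K hLip α hα hHJ q₀ γ hγ hγ0 ζ hζ hζ0
end

section
/- Let H : E × E → ℝ be differentiable with Lipschitz Hamiltonian vector field Z_H, and let ᾱ : E × E → E be a family of 1-forms, λ ↦ ᾱ(·,λ), each differentiable in q and each a solution of the generalized Hamiltonian Hamilton–Jacobi problem: fderiv (fun q => ᾱ(q,λ)) q (∇_pH(q, ᾱ(q,λ))) = −∇_qH(q, ᾱ(q,λ)) for all q, λ. Define Φ : E × E → E × E by Φ(q,λ) := (q, ᾱ(q,λ)) and assume Φ is injective. Let ζ : ℝ → E × E solve Hamilton's equations with ζ 0 = Φ(q₀, λ₀), and let γ : ℝ → E satisfy γ'(t) = ∇_pH(γ t, ᾱ(γ t, λ₀)) for all t with γ 0 = q₀. Then for every t ∈ ℝ and every (q,λ) with Φ(q,λ) = ζ t, one has λ = λ₀; that is, the parameter map of the complete solution is a constant of motion of Z_H. -/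
/-!
Along an integral curve `γ` of `q ↦ ∇ₚH (q, ᾱ (q, λ₀))`, the Hamilton–Jacobi equation for
`ᾱ (·, λ₀)` says exactly that the lifted curve `t ↦ (γ t, ᾱ (γ t, λ₀)) = Φ (γ t, λ₀)` solves
Hamilton's equations. It starts at `Φ (q₀, λ₀) = ζ 0`, so by uniqueness of solutions it is `ζ`;
injectivity of `Φ` then forces every parameter `λ` with `Φ (q, λ) = ζ t` to equal `λ₀`.
-/

open scoped Gradient

theorem hasDerivAt_hamVF_lift {n : ℕ}
    {H : EuclideanSpace ℝ (Fin n) × EuclideanSpace ℝ (Fin n) → ℝ}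
    {α : EuclideanSpace ℝ (Fin n) → EuclideanSpace ℝ (Fin n)}
    {γ : ℝ → EuclideanSpace ℝ (Fin n)} {t : ℝ}
    (hα : DifferentiableAt ℝ α (γ t))
    (hHJ : fderiv ℝ α (γ t) (gradP H (γ t) (α (γ t))) = -gradQ H (γ t) (α (γ t)))
    (hγ : HasDerivAt γ (gradP H (γ t) (α (γ t))) t) :
    HasDerivAt (fun s => (γ s, α (γ s))) (hamVF H (γ t, α (γ t))) t :=
  hγ.prodMk (hHJ ▸ hα.hasFDerivAt.comp_hasDerivAt t hγ)

theorem complete_solution_parameters_are_constants_of_motion_general {n : ℕ}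
    (H : EuclideanSpace ℝ (Fin n) × EuclideanSpace ℝ (Fin n) → ℝ)
    (K : NNReal) (hLip : LipschitzWith K (hamVF H))
    (ᾱ : EuclideanSpace ℝ (Fin n) × EuclideanSpace ℝ (Fin n) → EuclideanSpace ℝ (Fin n))
    (hdiff : ∀ lam q, DifferentiableAt ℝ (fun q' => ᾱ (q', lam)) q)
    (hHJ : ∀ lam q, fderiv ℝ (fun q' => ᾱ (q', lam)) q (gradP H q (ᾱ (q, lam))) =
      - gradQ H q (ᾱ (q, lam)))
    (hΦinj : Function.Injective
      (fun qlam : EuclideanSpace ℝ (Fin n) × EuclideanSpace ℝ (Fin n) =>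
        ((qlam.1, ᾱ qlam) : EuclideanSpace ℝ (Fin n) × EuclideanSpace ℝ (Fin n))))
    (q₀ lam₀ : EuclideanSpace ℝ (Fin n))
    (ζ : ℝ → EuclideanSpace ℝ (Fin n) × EuclideanSpace ℝ (Fin n))
    (hζ : ∀ t, HasDerivAt ζ (hamVF H (ζ t)) t) (hζ0 : ζ 0 = (q₀, ᾱ (q₀, lam₀)))
    (γ : ℝ → EuclideanSpace ℝ (Fin n))
    (hγ : ∀ t, HasDerivAt γ (gradP H (γ t) (ᾱ (γ t, lam₀))) t) (hγ0 : γ 0 = q₀) :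
    ∀ (t : ℝ) (q lam : EuclideanSpace ℝ (Fin n)),
      ((q, ᾱ (q, lam)) : EuclideanSpace ℝ (Fin n) × EuclideanSpace ℝ (Fin n)) = ζ t →
      lam = lam₀ := by
  intro t q lam hζt
  have hlift : ∀ s, HasDerivAt (fun s => (γ s, ᾱ (γ s, lam₀))) (hamVF H (γ s, ᾱ (γ s, lam₀))) s :=
    fun s => hasDerivAt_hamVF_lift (hdiff lam₀ (γ s)) (hHJ lam₀ (γ s)) (hγ s)
  have hζ_eq : ζ = fun s => (γ s, ᾱ (γ s, lam₀)) :=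
    ODE_solution_unique_univ (v := fun _ => hamVF H) (s := fun _ => Set.univ) (t₀ := 0)
      (fun _ => hLip.lipschitzOnWith) (fun s => ⟨hζ s, trivial⟩) (fun s => ⟨hlift s, trivial⟩)
      (by rw [hζ0, hγ0])
  have hΦ : ((q, lam) : EuclideanSpace ℝ (Fin n) × EuclideanSpace ℝ (Fin n)) = (γ t, lam₀) :=
    hΦinj (hζt.trans (congrFun hζ_eq t))
  exact congrArg Prod.snd hΦ

/-- For a complete solution `ᾱ` of the generalized Hamiltonian Hamilton–Jacobi problem,
with `Φ (q, λ) = (q, ᾱ (q, λ))` injective, the parameter map is a constant of motion of the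
Hamiltonian vector field: along any integral curve of `Z_H` starting at `Φ (q₀, λ₀)`, the
parameter stays equal to `λ₀`. -/
theorem complete_solution_parameters_are_constants_of_motion {n : ℕ}
    (H : EuclideanSpace ℝ (Fin n) × EuclideanSpace ℝ (Fin n) → ℝ)
    (hH : Differentiable ℝ H)
    (K : NNReal) (hLip : LipschitzWith K (hamVF H))
    (ᾱ : EuclideanSpace ℝ (Fin n) × EuclideanSpace ℝ (Fin n) → EuclideanSpace ℝ (Fin n))
    (hdiff : ∀ lam q, DifferentiableAt ℝ (fun q' => ᾱ (q', lam)) q)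
    (hHJ : ∀ lam q, fderiv ℝ (fun q' => ᾱ (q', lam)) q (gradP H q (ᾱ (q, lam))) =
      - gradQ H q (ᾱ (q, lam)))
    (hΦinj : Function.Injective
      (fun qlam : EuclideanSpace ℝ (Fin n) × EuclideanSpace ℝ (Fin n) =>
        ((qlam.1, ᾱ qlam) : EuclideanSpace ℝ (Fin n) × EuclideanSpace ℝ (Fin n))))
    (q₀ lam₀ : EuclideanSpace ℝ (Fin n))
    (ζ : ℝ → EuclideanSpace ℝ (Fin n) × EuclideanSpace ℝ (Fin n))
    (hζ : ∀ t, HasDerivAt ζ (hamVF H (ζ t)) t) (hζ0 : ζ 0 = (q₀, ᾱ (q₀, lam₀)))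
    (γ : ℝ → EuclideanSpace ℝ (Fin n))
    (hγ : ∀ t, HasDerivAt γ (gradP H (γ t) (ᾱ (γ t, lam₀))) t) (hγ0 : γ 0 = q₀) :
    ∀ (t : ℝ) (q lam : EuclideanSpace ℝ (Fin n)),
      ((q, ᾱ (q, lam)) : EuclideanSpace ℝ (Fin n) × EuclideanSpace ℝ (Fin n)) = ζ t →
      lam = lam₀ :=
  complete_solution_parameters_are_constants_of_motion_general H K hLip ᾱ hdiff hHJ hΦinj q₀ lam₀ ζ
    hζ hζ0 γ hγ hγ0
end

section
/- Let H : E × E → ℝ be differentiable, let F := EuclideanSpace ℝ (Fin m), let α : F → E × E be a map with differentiable components a := Prod.fst ∘ α and b := Prod.snd ∘ α, and let X : F → F be a vector field. Assume (α, X) solves the slicing equation Tα ∘ X = Z_H ∘ α, i.e. for all x ∈ F: fderiv a x (X x) = ∇_pH(α x) and fderiv b x (X x) = −∇_qH(α x). Then for all x ∈ F and v ∈ F, ⟪fderiv a x (X x), fderiv b x v⟫ − ⟪fderiv a x v, fderiv b x (X x)⟫ = fderiv (H ∘ α) x v; that is, i_X (α*ω) = d(α*H). -/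
/-!
By the chain rule and the splitting of `dH` into partial gradients,
`d(H ∘ α) v = ⟪∇_qH, a' v⟫ + ⟪∇_pH, b' v⟫`. The slicing equation replaces `∇_pH` by `a' X`
and `∇_qH` by `-b' X`, which is exactly the contraction `(α*ω)(X, v)`.
-/

open scoped Gradient RealInnerProductSpace

section PartialDerivatives

variable {𝕜 : Type*} [NontriviallyNormedField 𝕜]
  {E F G W : Type*} [NormedAddCommGroup E] [NormedSpace 𝕜 E] [NormedAddCommGroup F]
  [NormedSpace 𝕜 F] [NormedAddCommGroup G] [NormedSpace 𝕜 G] [NormedAddCommGroup W]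
  [NormedSpace 𝕜 W]

theorem fderiv_apply_prod_eq_add_partial {f : E × F → G} {q : E} {p : F}
    (hf : DifferentiableAt 𝕜 f (q, p)) (u : E) (w : F) :
    fderiv 𝕜 f (q, p) (u, w) =
      fderiv 𝕜 (fun q' => f (q', p)) q u + fderiv 𝕜 (fun p' => f (q, p')) p w := by
  have hleft : HasFDerivAt (fun q' => f (q', p)) (fderiv 𝕜 f (q, p) ∘L .inl 𝕜 E F) q :=
    hf.hasFDerivAt.comp q (hasFDerivAt_prodMk_left q p)
  have hright : HasFDerivAt (fun p' => f (q, p')) (fderiv 𝕜 f (q, p) ∘L .inr 𝕜 E F) p :=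
    hf.hasFDerivAt.comp p (hasFDerivAt_prodMk_right q p)
  rw [hleft.fderiv, hright.fderiv, ContinuousLinearMap.comp_apply, ContinuousLinearMap.comp_apply,
    ← map_add, ContinuousLinearMap.inl_apply, ContinuousLinearMap.inr_apply, Prod.mk_add_mk,
    add_zero, zero_add]

theorem fderiv_comp_apply_eq_fderiv_apply_prod {f : E × F → G} {α : W → E × F} {x : W}
    (hf : DifferentiableAt 𝕜 f (α x)) (ha : DifferentiableAt 𝕜 (fun x => (α x).1) x)
    (hb : DifferentiableAt 𝕜 (fun x => (α x).2) x) (v : W) :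
    fderiv 𝕜 (f ∘ α) x v =
      fderiv 𝕜 f (α x)
        (fderiv 𝕜 (fun x => (α x).1) x v, fderiv 𝕜 (fun x => (α x).2) x v) := by
  have hα : fderiv 𝕜 α x =
      (fderiv 𝕜 (fun x => (α x).1) x).prod (fderiv 𝕜 (fun x => (α x).2) x) :=
    ha.fderiv_prodMk hb
  rw [fderiv_comp x hf (ha.prodMk hb), hα]
  rfl

end PartialDerivatives

theorem fderiv_apply_eq_inner_gradQ_add_inner_gradP {n : ℕ}
    {H : EuclideanSpace ℝ (Fin n) × EuclideanSpace ℝ (Fin n) → ℝ}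
    {q p : EuclideanSpace ℝ (Fin n)} (hH : DifferentiableAt ℝ H (q, p))
    (u w : EuclideanSpace ℝ (Fin n)) :
    fderiv ℝ H (q, p) (u, w) = ⟪gradQ H q p, u⟫ + ⟪gradP H q p, w⟫ := by
  rw [fderiv_apply_prod_eq_add_partial hH, gradQ, gradP, inner_gradient_left,
    inner_gradient_left]

/-- If `(α, X)` solves the slicing equation `Tα ∘ X = Z_H ∘ α`, then the contraction of the
pullback `α*ω` of the canonical symplectic form with `X` equals the differential of the
pullback `α*H = H ∘ α`: `i_X (α*ω) = d(α*H)`. -/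
theorem slicing_implies_contraction_equation {n m : ℕ}
    (H : EuclideanSpace ℝ (Fin n) × EuclideanSpace ℝ (Fin n) → ℝ)
    (hH : Differentiable ℝ H)
    (α : EuclideanSpace ℝ (Fin m) → EuclideanSpace ℝ (Fin n) × EuclideanSpace ℝ (Fin n))
    (ha : Differentiable ℝ (fun x => (α x).1)) (hb : Differentiable ℝ (fun x => (α x).2))
    (X : EuclideanSpace ℝ (Fin m) → EuclideanSpace ℝ (Fin m))
    (hslice : ∀ x, fderiv ℝ (fun x' => (α x').1) x (X x) = gradP H (α x).1 (α x).2 ∧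
      fderiv ℝ (fun x' => (α x').2) x (X x) = - gradQ H (α x).1 (α x).2) :
    ∀ x v, ⟪fderiv ℝ (fun x' => (α x').1) x (X x), fderiv ℝ (fun x' => (α x').2) x v⟫ -
        ⟪fderiv ℝ (fun x' => (α x').1) x v, fderiv ℝ (fun x' => (α x').2) x (X x)⟫ =
      fderiv ℝ (H ∘ α) x v := by
  intro x v
  obtain ⟨hXq, hXp⟩ := hslice x
  rw [fderiv_comp_apply_eq_fderiv_apply_prod (hH (α x)) (ha x) (hb x),
    fderiv_apply_eq_inner_gradQ_add_inner_gradP (hH (α x)), hXq, hXp, inner_neg_right,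
    sub_neg_eq_add, real_inner_comm (gradQ H _ _), add_comm]
end
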